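/- arXiv:1711.03912 — 10 statements merged into one kernel-verified Lean document; each statement's English description precedes it below -/
import Mathlib

section
/- Let L be a complete lattice, X a set of elements of L not containing the top element ⊤, and suppose L is X-top. Then for every subset Y of X, the closure of Y in the space (X, τ^cl) equals the variety V(I(Y)) = {p ∈ X | I(Y) ≤ p}, where I(Y) = ⨅_{p ∈ Y} p. -/
namespace ZariskiLattice

variable {L : Type*} [CompleteLattice L]

/-- The variety of `a` inside `X`: the points of `X` above `a`. -/
def V (X : Set L) (a : L) : Set X := {p : X | a ≤ (p : L)}

/-- The classical Zariski topology on `X`, generated by the subbase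
`{X \ V a | a ∈ L}`. -/
def tauCl (X : Set L) : TopologicalSpace X :=
  TopologicalSpace.generateFrom {s : Set X | ∃ a : L, s = (V X a)ᶜ}

/-- The finer patch topology on `X`, generated by the subbase
`{V a ∩ (X \ V b) | a, b ∈ L}`. -/
def tauFp (X : Set L) : TopologicalSpace X :=
  TopologicalSpace.generateFrom {s : Set X | ∃ a b : L, s = V X a ∩ (V X b)ᶜ}

/-- `I(A) = ⨅_{p ∈ A} p` for a subset `A ⊆ X`. -/
def lanI (X : Set L) (A : Set X) : L := ⨅ p ∈ A, (p : L)

/-- The radical `√a = I(V(a))` of an element `a`. -/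
def rad (X : Set L) (a : L) : L := lanI X (V X a)

/-- The set of radical elements `C(L) = {a | √a = a}`. -/
def CL (X : Set L) : Set L := {a : L | rad X a = a}

/-- `L` is `X`-top: the varieties are closed under finite unions. -/
def IsXTop (X : Set L) : Prop := ∀ a b : L, ∃ c : L, V X a ∪ V X b = V X c

/-- The set of maximal elements of `C(L) \ {⊤}`. -/
def MaxC (X : Set L) : Set L :=
  {q : L | q ∈ CL X ∧ q ≠ ⊤ ∧ ∀ r ∈ CL X, r ≠ ⊤ → q ≤ r → r = q}

/-- `C(L)` satisfies the complete max property. -/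
def CompleteMax (X : Set L) : Prop :=
  ∀ q ∈ MaxC X, ¬ (⨅ p ∈ MaxC X \ {q}, p) ≤ q

lemma open_aux (X : Set L) (hX : (⊤ : L) ∉ X) (hTop : IsXTop X) {U : Set X}
    (hU : TopologicalSpace.GenerateOpen {s : Set X | ∃ a : L, s = (V X a)ᶜ} U) :
    ∀ p ∈ U, ∃ c : L, p ∈ (V X c)ᶜ ∧ (V X c)ᶜ ⊆ U := by
  induction hU with
  | basic s hs =>
      obtain ⟨a, rfl⟩ := hs
      exact fun p hp => ⟨a, hp, subset_rfl⟩
  | univ =>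
      intro p _
      refine ⟨⊤, ?_, fun _ _ => trivial⟩
      intro h
      exact hX (top_le_iff.mp h ▸ p.2)
  | inter s t hs ht ihs iht =>
      intro p hp
      obtain ⟨a, hpa, has⟩ := ihs p hp.1
      obtain ⟨b, hpb, hbt⟩ := iht p hp.2
      obtain ⟨c, hc⟩ := hTop a b
      have hcc : (V X c)ᶜ = (V X a)ᶜ ∩ (V X b)ᶜ := by
        rw [← hc, Set.compl_union]
      refine ⟨c, ?_, ?_⟩
      · rw [hcc]; exact ⟨hpa, hpb⟩
      · rw [hcc]
        exact fun q hq => ⟨has hq.1, hbt hq.2⟩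
  | sUnion S hS ih =>
      intro p hp
      obtain ⟨s, hsS, hps⟩ := hp
      obtain ⟨c, h1, h2⟩ := ih s hsS p hps
      exact ⟨c, h1, h2.trans (Set.subset_sUnion_of_mem hsS)⟩

/-- If `L` is `X`-top, the closure of `Y ⊆ X` in `(X, τ^cl)` is `V(I(Y))`. -/
theorem closure_eq_variety_of_inf (X : Set L) (hX : (⊤ : L) ∉ X) (hTop : IsXTop X)
    (Y : Set X) :
    @closure ↥X (tauCl X) Y = V X (lanI X Y) := by
  letI := tauCl X
  apply Set.Subset.antisymm
  · apply closure_minimal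
    · intro p hp
      exact biInf_le (fun p : X => (p : L)) hp
    · rw [← isOpen_compl_iff]
      exact TopologicalSpace.GenerateOpen.basic _ ⟨lanI X Y, rfl⟩
  · intro p hp
    by_contra h
    have hop : IsOpen ((closure Y)ᶜ) := isOpen_compl_iff.mpr isClosed_closure
    obtain ⟨c, hpc, hsub⟩ := open_aux X hX hTop hop p h
    have hYc : Y ⊆ V X c := fun q hq => by
      by_contra hqc
      exact hsub hqc (subset_closure hq)
    have : c ≤ lanI X Y := le_iInf fun q => le_iInf fun hq => hYc hq
    exact hpc (this.trans hp)

end ZariskiLattice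
end

section
/- Let L be a complete lattice, X a set of elements of L not containing ⊤, and suppose L is X-top. Then every closed subset Y of (X, τ^cl) satisfies Y = ⋃_{p ∈ Y} V(p) = V(⨅_{p ∈ Y} p). -/
namespace ZariskiLattice

variable {L : Type*} [CompleteLattice L]

lemma closed_is_variety (X : Set L) (hX : (⊤ : L) ∉ X) (hTop : IsXTop X)
    (Y : Set X) (hY : @IsClosed ↥X (tauCl X) Y) : ∃ c : L, Y = V X c := by
  have hopen : TopologicalSpace.GenerateOpen {s : Set X | ∃ a : L, s = (V X a)ᶜ} Yᶜ :=
    hY.isOpen_compl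
  have key : ∀ s : Set X, TopologicalSpace.GenerateOpen {s : Set X | ∃ a : L, s = (V X a)ᶜ} s →
      ∃ c : L, sᶜ = V X c := by
    intro s hs
    induction hs with
    | basic s hs =>
        obtain ⟨a, rfl⟩ := hs
        exact ⟨a, compl_compl _⟩
    | univ =>
        refine ⟨⊤, ?_⟩
        rw [Set.compl_univ]
        ext p
        simp only [V, Set.mem_setOf_eq, Set.mem_empty_iff_false, false_iff, top_le_iff]
        intro h
        exact hX (h ▸ p.2)
    | inter s t _ _ ihs iht =>
        obtain ⟨a, ha⟩ := ihs
        obtain ⟨b, hb⟩ := iht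
        obtain ⟨c, hc⟩ := hTop a b
        exact ⟨c, by rw [Set.compl_inter, ha, hb, hc]⟩
    | sUnion S _ ih =>
        choose f hf using fun s (hs : s ∈ S) => ih s hs
        refine ⟨⨆ s ∈ S, f s ‹_›, ?_⟩
        rw [Set.compl_sUnion]
        ext p
        simp only [Set.sInter_image, Set.mem_iInter, V, Set.mem_setOf_eq, iSup_le_iff]
        constructor
        · intro h s hs
          have := h s hs
          rw [hf s hs] at this
          exact this
        · intro h s hs
          rw [hf s hs]
          exact h s hs
  have := key Yᶜ hopen
  rwa [compl_compl] at this

/-- If `L` is `X`-top, every closed `Y ⊆ X` satisfies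
`Y = ⋃_{p ∈ Y} V(p) = V(⨅_{p ∈ Y} p)`. -/
theorem closed_eq_iUnion_varieties (X : Set L) (hX : (⊤ : L) ∉ X) (hTop : IsXTop X)
    (Y : Set X) (hY : @IsClosed ↥X (tauCl X) Y) :
    (Y = ⋃ p ∈ Y, V X (p : L)) ∧ Y = V X (lanI X Y) := by
  obtain ⟨c, hc⟩ := closed_is_variety X hX hTop Y hY
  have hcle : ∀ p : X, p ∈ Y → c ≤ (p : L) := fun p hp => by rw [hc] at hp; exact hp
  have h2 : Y = V X (lanI X Y) := by
    apply le_antisymm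
    · intro p hp
      exact iInf₂_le p hp
    · intro q hq
      rw [hc]
      calc c ≤ lanI X Y := le_iInf₂ hcle
        _ ≤ (q : L) := hq
  refine ⟨?_, h2⟩
  apply le_antisymm
  · intro p hp
    exact Set.mem_biUnion hp (le_refl (p : L))
  · intro q hq
    obtain ⟨p, hp, hpq⟩ := Set.mem_iUnion₂.1 hq
    rw [hc]
    exact le_trans (hcle p hp) hpq


end ZariskiLattice
end

section
/- Let L be a complete lattice and X a set of elements of L not containing ⊤. The space (X, τ^cl) is T1 if and only if every element of X is both a maximal element of X and a minimal element of X with respect to the partial order of L (i.e. Max(X) = X = Min(X)). -/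
namespace ZariskiLattice

variable {L : Type*} [CompleteLattice L]

/-- `(X, τ^cl)` is T1 iff every element of `X` is both maximal and
minimal in `X` (i.e. `Max(X) = X = Min(X)`). -/
theorem t1_iff_max_eq_min_eq (X : Set L) (hX : (⊤ : L) ∉ X) :
    @T1Space ↥X (tauCl X) ↔
      ((∀ p ∈ X, ∀ q ∈ X, p ≤ q → q = p) ∧ (∀ p ∈ X, ∀ q ∈ X, q ≤ p → q = p)) := by
  constructor
  · intro h
    have key : ∀ (P Q : ↥X), (P : L) ≤ (Q : L) → Q = P := by
      intro P Q hle
      by_contra hne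
      obtain ⟨U, hU, hQU, hPU⟩ :=
        ((@t1Space_iff_exists_open _ (tauCl X)).mp h) hne
      have mono : ∀ U : Set ↥X,
          TopologicalSpace.GenerateOpen {s : Set ↥X | ∃ a : L, s = (V X a)ᶜ} U →
          Q ∈ U → P ∈ U := by
        intro U hU
        induction hU with
        | basic s hs =>
          obtain ⟨a, rfl⟩ := hs
          exact fun hQ hP => hQ (hP.trans hle)
        | univ => exact fun _ => trivial
        | inter s t _ _ ihs iht => exact fun h => ⟨ihs h.1, iht h.2⟩
        | sUnion S _ ih => rintro ⟨s, hs, hQs⟩; exact ⟨s, hs, ih s hs hQs⟩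
      exact hPU (mono U hU hQU)
    constructor
    · intro p hp q hq hle
      have := key ⟨p, hp⟩ ⟨q, hq⟩ hle
      exact congrArg Subtype.val this
    · intro p hp q hq hle
      have := key ⟨q, hq⟩ ⟨p, hp⟩ hle
      exact (congrArg Subtype.val this).symm
  · rintro ⟨hmax, _⟩
    refine (@t1Space_iff_exists_open _ (tauCl X)).mpr ?_
    intro P Q hne
    refine ⟨(V X (Q : L))ᶜ, ?_, ?_, ?_⟩
    · exact TopologicalSpace.GenerateOpen.basic _ ⟨(Q : L), rfl⟩
    · intro hQP
      exact hne (Subtype.ext (hmax _ Q.2 _ P.2 hQP))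
    · simp [V]


end ZariskiLattice
end

section
/- Let L be a complete lattice and X a set of elements of L not containing ⊤. Then the maximal elements of X coincide with the maximal elements of C(L) \ {⊤}: an element p is maximal in X (with respect to the order of L) if and only if p is a maximal element of the set of radical elements different from ⊤. -/
namespace ZariskiLattice

variable {L : Type*} [CompleteLattice L]

/-- `p` is a maximal element of `X` iff `p` is a maximal element of
`C(L) \ {⊤}`, i.e. `Max(X) = Max(C(L))`. -/
theorem max_X_eq_max_CL (X : Set L) (hX : (⊤ : L) ∉ X) (p : L) :
    (p ∈ X ∧ ∀ q ∈ X, p ≤ q → q = p) ↔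
      (p ∈ CL X ∧ p ≠ ⊤ ∧ ∀ q ∈ CL X, q ≠ ⊤ → p ≤ q → q = p) := by
  have hXC : ∀ q ∈ X, q ∈ CL X := by
    intro q hq
    refine le_antisymm ?_ (le_iInf₂ fun r hr => hr)
    exact iInf₂_le (⟨q, hq⟩ : X) (le_refl q)
  constructor
  · rintro ⟨hpX, hmax⟩
    refine ⟨hXC p hpX, fun h => hX (h ▸ hpX), ?_⟩
    intro q hqC hqT hpq
    rcases (V X q).eq_empty_or_nonempty with hV | hV
    · exact absurd (by rw [← hqC]; simp [rad, lanI, hV]) hqT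
    · obtain ⟨r, hr⟩ := hV
      have hrp : (r : L) = p := hmax r r.2 (hpq.trans hr)
      have : rad X q = p :=
        le_antisymm ((iInf₂_le r hr).trans hrp.le)
          (le_iInf₂ fun s hs => (hmax s s.2 (hpq.trans hs)).ge)
      rw [hqC] at this; exact this
  · rintro ⟨hpC, hpT, hmax⟩
    rcases (V X p).eq_empty_or_nonempty with hV | hV
    · exact absurd (by rw [← hpC]; simp [rad, lanI, hV]) hpT
    · obtain ⟨r, hr⟩ := hV
      have hrp : (r : L) = p :=
        hmax r (hXC r r.2) (fun h => hX (h ▸ r.2)) hr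
      have hpX : p ∈ X := hrp ▸ r.2
      exact ⟨hpX, fun q hq hpq =>
        hmax q (hXC q hq) (fun h => hX (h ▸ hq)) hpq⟩

end ZariskiLattice
end

section
/- Let L be a complete lattice and X a set of elements of L not containing ⊤, and suppose C(L) satisfies the complete max property. Then the following are equivalent: (1) every element of X is both maximal and minimal in X (Max(X) = X = Min(X)); (2) (X, τ^cl) is Hausdorff (T2); (3) (X, τ^cl) is T1; (4) (X, τ^cl) is discrete. -/
namespace ZariskiLattice

variable {L : Type*} [CompleteLattice L]

/-!
Every basic open set `X \ V(a)` is downward closed, so `p ≤ q` makes `p` a specialization of `q`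
and a T1 space `X` must be an antichain. Conversely, the points of an antichain `X ∌ ⊤` are
radical and maximal in `C(L) \ {⊤}`, and the complete max property says precisely that `P` is the
only point of `X` outside `V(⨅ (Max(C(L)) \ {P}))`; so all singletons are open.
-/

attribute [local instance] tauCl

variable {X : Set L}

lemma specializes_of_le {p q : X} (h : (p : L) ≤ q) : p ⤳ q := by
  rw [Specializes, tauCl, TopologicalSpace.nhds_generateFrom, TopologicalSpace.nhds_generateFrom]
  exact le_iInf₂ fun _ ⟨hqs, a, hs⟩ =>
    iInf₂_le _ ⟨by subst hs; exact fun ha => hqs (ha.trans h), a, hs⟩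

lemma isAntichain_of_t1Space [T1Space X] : IsAntichain (· ≤ ·) X :=
  fun p hp q hq hne hpq =>
    hne (congrArg Subtype.val (specializes_of_le (p := ⟨p, hp⟩) (q := ⟨q, hq⟩) hpq).eq)

lemma mem_CL_of_mem {p : L} (hp : p ∈ X) : p ∈ CL X :=
  le_antisymm (iInf₂_le (⟨p, hp⟩ : X) le_rfl) (le_iInf₂ fun _ hq => hq)

lemma V_nonempty_of_mem_CL {r : L} (hr : r ∈ CL X) (hr_top : r ≠ ⊤) : (V X r).Nonempty := by
  by_contra h
  rw [Set.not_nonempty_iff_eq_empty] at h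
  exact hr_top (hr.symm.trans (by simp [rad, lanI, h]))

lemma subset_MaxC_of_isAntichain (hX : (⊤ : L) ∉ X) (hanti : IsAntichain (· ≤ ·) X) :
    X ⊆ MaxC X := by
  refine fun p hp => ⟨mem_CL_of_mem hp, fun h => hX (h ▸ hp), fun r hr hr_top hpr => ?_⟩
  obtain ⟨q, hrq⟩ := V_nonempty_of_mem_CL hr hr_top
  have hqp : (q : L) = p := (hanti.eq hp q.2 (le_trans hpr hrq)).symm
  exact le_antisymm (hqp ▸ hrq) hpr

lemma singleton_eq_compl_V (hCM : CompleteMax X) (hmax : X ⊆ MaxC X) (P : X) :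
    ({P} : Set X) = (V X (⨅ p ∈ MaxC X \ {(P : L)}, p))ᶜ := by
  ext Q
  refine ⟨?_, fun hQ => ?_⟩
  · rintro rfl
    exact hCM _ (hmax Q.2)
  · by_contra hne
    exact hQ (iInf₂_le (Q : L) ⟨hmax Q.2, fun h => hne (Subtype.ext h)⟩)

lemma discreteTopology_of_isAntichain (hX : (⊤ : L) ∉ X) (hCM : CompleteMax X)
    (hanti : IsAntichain (· ≤ ·) X) : DiscreteTopology X := by
  refine discreteTopology_iff_isOpen_singleton.mpr fun P => ?_
  rw [singleton_eq_compl_V hCM (subset_MaxC_of_isAntichain hX hanti) P]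
  exact .basic _ ⟨_, rfl⟩

/-- If `C(L)` satisfies the complete max property, then the following
are equivalent: (1) `Max(X) = X = Min(X)`; (2) `(X, τ^cl)` is T2; (3) `(X, τ^cl)` is
T1; (4) `(X, τ^cl)` is discrete. -/
theorem tfae_of_completeMax (X : Set L) (hX : (⊤ : L) ∉ X) (hCM : CompleteMax X) :
    (((∀ p ∈ X, ∀ q ∈ X, p ≤ q → q = p) ∧ (∀ p ∈ X, ∀ q ∈ X, q ≤ p → q = p)) ↔
      @T2Space ↥X (tauCl X)) ∧
    (@T2Space ↥X (tauCl X) ↔ @T1Space ↥X (tauCl X)) ∧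
    (@T1Space ↥X (tauCl X) ↔ @DiscreteTopology ↥X (tauCl X)) := by
  have anti_iff : ((∀ p ∈ X, ∀ q ∈ X, p ≤ q → q = p) ∧ (∀ p ∈ X, ∀ q ∈ X, q ≤ p → q = p)) ↔
      IsAntichain (· ≤ ·) X :=
    ⟨fun h _ hp _ hq hne hpq => hne (h.1 _ hp _ hq hpq).symm,
      fun h => ⟨fun _ hp _ hq hpq => (h.eq hp hq hpq).symm, fun _ hp _ hq hqp => h.eq hq hp hqp⟩⟩
  have discrete_of_t1 (_ : T1Space X) : DiscreteTopology X :=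
    discreteTopology_of_isAntichain hX hCM isAntichain_of_t1Space
  rw [anti_iff]
  exact ⟨⟨fun h => (discreteTopology_of_isAntichain hX hCM h).toT2Space,
      fun _ => isAntichain_of_t1Space⟩,
    ⟨fun _ => inferInstance, fun h => (discrete_of_t1 h).toT2Space⟩,
    ⟨discrete_of_t1, fun _ => inferInstance⟩⟩

end ZariskiLattice
end

section
/- Let L be a complete lattice and X a set of elements of L not containing ⊤. If (X, τ^cl) is sober, then X satisfies the radical condition: for every x ∈ L such that V(x) is an irreducible subset of (X, τ^cl), one has √x ∈ X. Conversely, if L is X-top and X satisfies the radical condition, then (X, τ^cl) is sober. -/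
namespace ZariskiLattice

variable {L : Type*} [CompleteLattice L]

lemma generateOpen_down {X : Set L} {U : Set X}
    (hU : TopologicalSpace.GenerateOpen {s : Set X | ∃ a : L, s = (V X a)ᶜ} U) :
    ∀ p g : X, (g : L) ≤ (p : L) → p ∈ U → g ∈ U := by
  induction hU with
  | basic s hs =>
    obtain ⟨a, rfl⟩ := hs
    intro p g h hp hg
    exact hp (le_trans hg h)
  | univ => intro p g _ _; trivial
  | inter s t _ _ ihs iht =>
    intro p g h hp
    exact ⟨ihs p g h hp.1, iht p g h hp.2⟩
  | sUnion S _ ih =>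
    rintro p g h ⟨s, hs, hp⟩
    exact ⟨s, hs, ih s hs p g h hp⟩

lemma isClosed_V (X : Set L) (a : L) : @IsClosed ↥X (tauCl X) (V X a) := by
  letI := tauCl X
  exact { isOpen_compl := TopologicalSpace.GenerateOpen.basic _ ⟨a, rfl⟩ }

lemma closure_singleton_eq (X : Set L) (g : X) :
    @closure ↥X (tauCl X) {g} = V X (g : L) := by
  letI := tauCl X
  apply subset_antisymm
  · exact closure_minimal
      (Set.singleton_subset_iff.2 (le_refl (g : L))) (isClosed_V X (g : L))
  · intro p hp
    rw [mem_closure_iff]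
    intro o ho hpo
    exact ⟨g, generateOpen_down ho p g hp hpo, rfl⟩

lemma closed_eq_V {X : Set L} (hX : (⊤ : L) ∉ X) (htop : IsXTop X)
    {F : Set X} (hF : @IsClosed ↥X (tauCl X) F) : ∃ a : L, F = V X a := by
  have key : ∀ U : Set X,
      TopologicalSpace.GenerateOpen {s : Set X | ∃ a : L, s = (V X a)ᶜ} U →
      ∃ a : L, U = (V X a)ᶜ := by
    intro U hU
    induction hU with
    | basic s hs => exact hs
    | univ =>
      refine ⟨⊤, ?_⟩
      have : V X (⊤ : L) = (∅ : Set X) := by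
        ext p
        simp only [V, Set.mem_setOf_eq, top_le_iff, Set.mem_empty_iff_false, iff_false]
        intro h
        exact hX (h ▸ p.2)
      rw [this, Set.compl_empty]
    | inter s t _ _ ihs iht =>
      obtain ⟨a, rfl⟩ := ihs
      obtain ⟨b, rfl⟩ := iht
      obtain ⟨c, hc⟩ := htop a b
      exact ⟨c, by rw [← Set.compl_union, hc]⟩
    | sUnion S _ ih =>
      choose f hf using ih
      refine ⟨⨆ s : {s // s ∈ S}, f s s.2, ?_⟩
      ext p
      simp only [Set.mem_sUnion, Set.mem_compl_iff, V, Set.mem_setOf_eq, iSup_le_iff,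
        not_forall]
      constructor
      · rintro ⟨s, hs, hp⟩
        refine ⟨⟨s, hs⟩, ?_⟩
        have := hf s hs
        rw [this] at hp
        exact hp
      · rintro ⟨⟨s, hs⟩, hp⟩
        refine ⟨s, hs, ?_⟩
        rw [hf s hs]
        exact hp
  obtain ⟨a, ha⟩ := key Fᶜ hF.isOpen_compl
  exact ⟨a, by rw [← compl_compl F, ha, compl_compl]⟩

lemma le_rad (X : Set L) (a : L) : a ≤ rad X a :=
  le_iInf fun p => le_iInf fun hp => hp

lemma rad_le (X : Set L) (a : L) {p : X} (hp : p ∈ V X a) : rad X a ≤ (p : L) :=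
  iInf₂_le p hp

lemma V_rad (X : Set L) (a : L) : V X (rad X a) = V X a := by
  ext p
  exact ⟨fun h => le_trans (le_rad X a) h, fun h => rad_le X a h⟩

/-- If `(X, τ^cl)` is sober then `X` satisfies the radical condition;
conversely, if `L` is `X`-top and `X` satisfies the radical condition, then
`(X, τ^cl)` is sober. -/
theorem sober_and_radical_condition (X : Set L) (hX : (⊤ : L) ∉ X) :
    ((∀ F : Set X, @IsClosed ↥X (tauCl X) F → @IsIrreducible ↥X (tauCl X) F →
        ∃! g : X, @closure ↥X (tauCl X) {g} = F) →
      ∀ x : L, @IsIrreducible ↥X (tauCl X) (V X x) → rad X x ∈ X) ∧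
    (IsXTop X →
      (∀ x : L, @IsIrreducible ↥X (tauCl X) (V X x) → rad X x ∈ X) →
      ∀ F : Set X, @IsClosed ↥X (tauCl X) F → @IsIrreducible ↥X (tauCl X) F →
        ∃! g : X, @closure ↥X (tauCl X) {g} = F) := by
  letI := tauCl X
  constructor
  · intro hsober x hirr
    obtain ⟨g, hg, -⟩ := hsober (V X x) (isClosed_V X x) hirr
    rw [closure_singleton_eq] at hg
    have hgm : g ∈ V X x := hg ▸ (le_refl (g : L))
    have h1 : rad X x ≤ (g : L) := rad_le X x hgm
    have h2 : (g : L) ≤ rad X x := le_iInf fun p => le_iInf fun hp => by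
      rw [← hg] at hp; exact hp
    have : rad X x = (g : L) := le_antisymm h1 h2
    rw [this]
    exact g.2
  · intro htop hradcond F hF hirr
    obtain ⟨a, rfl⟩ := closed_eq_V hX htop hF
    have hra : rad X a ∈ X := hradcond a hirr
    refine ⟨⟨rad X a, hra⟩, ?_, ?_⟩
    · show closure {(⟨rad X a, hra⟩ : X)} = V X a
      rw [closure_singleton_eq]
      exact V_rad X a
    · intro g' hg'
      rw [closure_singleton_eq] at hg'
      apply Subtype.ext
      have h1 : (g' : L) ≤ rad X a := by
        have : (⟨rad X a, hra⟩ : X) ∈ V X a := V_rad X a ▸ (le_refl (rad X a))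
        rw [← hg'] at this
        exact this
      have h2 : rad X a ≤ (g' : L) := by
        have : g' ∈ V X a := by rw [← hg']; exact le_refl (g' : L)
        exact rad_le X a this
      exact le_antisymm h1 h2

end ZariskiLattice
end

section
/- Let L be a complete lattice and X a set of elements of L not containing ⊤. If the finer patch topology (X, τ^fp) is compact, then the classical Zariski topology (X, τ^cl) is compact, T0, sober, and has a basis of compact open sets that is closed under finite intersections (hence (X, τ^cl) is a spectral space). -/
namespace ZariskiLattice

variable {L : Type*} [CompleteLattice L]

/-! The patch topology refines the Zariski topology and, since `V ⊤ = ∅`, makes every variety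
`V a` clopen; so patch compactness makes every Zariski-closed set, and every intersection of
basic opens `X \ V a`, compact in both topologies. Specialization in the Zariski topology is the
order of `L`, which gives T0 and `closure {g} = V g`. For an irreducible closed `F`, the
patch-closed sets `F \ V b` that are nonempty have the finite intersection property by
irreducibility, so they share a point `g`; then `F ⊆ V g`, and `g` is the generic point of `F`. -/

open Set TopologicalSpace Topology

lemma _root_.IsIrreducible.inter_biInter_nonempty {α ι : Type*} [TopologicalSpace α] {F : Set α}
    (hF : IsIrreducible F) {t : ι → Set α} (ht : ∀ i, IsOpen (t i)) (hFt : ∀ i, (F ∩ t i).Nonempty)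
    (u : Finset ι) : (F ∩ ⋂ i ∈ u, t i).Nonempty := by
  classical
  simpa only [Finset.coe_image, sInter_image, Finset.set_biInter_coe] using
    isIrreducible_iff_sInter.mp hF (u.image t)
    (by simpa only [Finset.forall_mem_image] using fun i _ => ht i)
    (by simpa only [Finset.forall_mem_image] using fun i _ => hFt i)

attribute [local instance] tauCl

section
variable (X : Set L)

lemma V_bot : V X ⊥ = univ := by
  ext p; simp [V]

lemma V_top (hX : (⊤ : L) ∉ X) : V X ⊤ = ∅ :=
  eq_empty_of_forall_notMem fun p hp => hX (top_le_iff.mp hp ▸ p.2)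

lemma isOpen_tauFp_compl_V (a : L) : IsOpen[tauFp X] (V X a)ᶜ := by
  have : IsOpen[tauFp X] (V X ⊥ ∩ (V X a)ᶜ) := GenerateOpen.basic _ ⟨⊥, a, rfl⟩
  simpa only [V_bot, univ_inter] using this

lemma isOpen_tauFp_V (hX : (⊤ : L) ∉ X) (a : L) : IsOpen[tauFp X] (V X a) := by
  have : IsOpen[tauFp X] (V X a ∩ (V X ⊤)ᶜ) := GenerateOpen.basic _ ⟨a, ⊤, rfl⟩
  simpa only [V_top X hX, compl_empty, inter_univ] using this

lemma isClosed_tauFp_compl_V (hX : (⊤ : L) ∉ X) (a : L) : IsClosed[tauFp X] (V X a)ᶜ :=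
  @IsOpen.isClosed_compl _ (tauFp X) _ (isOpen_tauFp_V X hX a)

lemma isOpen_compl_V (a : L) : IsOpen (V X a)ᶜ :=
  GenerateOpen.basic _ ⟨a, rfl⟩

lemma tauFp_le_tauCl : tauFp X ≤ tauCl X :=
  le_generateFrom <| by rintro s ⟨a, rfl⟩; exact isOpen_tauFp_compl_V X a

lemma isCompact_of_isCompact_tauFp {s : Set X} (hs : @IsCompact X (tauFp X) s) :
    IsCompact s := by
  simpa using @IsCompact.image _ _ (tauFp X) _ _ id hs (continuous_id_of_le (tauFp_le_tauCl X))

lemma specializes_iff_le {x y : X} : x ⤳ y ↔ (x : L) ≤ y := by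
  rw [specializes_iff_pure, tauCl, nhds_generateFrom]
  simp only [V, mem_ofPred_eq, le_iInf_iff, Filter.le_principal_iff, Filter.mem_pure, and_imp,
    forall_exists_index, Subtype.coe_le_coe]
  refine ⟨fun h => not_not.1 fun hxy => h _ hxy x rfl le_rfl, ?_⟩
  rintro hxy _ hy a rfl hax
  exact hy (le_trans hax hxy)

lemma closure_singleton_eq_V (g : X) : closure {g} = V X g := by
  ext q
  rw [← specializes_iff_mem_closure, specializes_iff_le]
  rfl

lemma t0Space_tauCl : T0Space X :=
  ⟨fun _ _ h => le_antisymm ((specializes_iff_le X).1 h.specializes)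
    ((specializes_iff_le X).1 h.specializes')⟩

lemma isCompact_sInter_compl_V (hX : (⊤ : L) ∉ X) (hfp : @CompactSpace X (tauFp X))
    {f : Set (Set X)} (hf : ∀ s ∈ f, ∃ a : L, s = (V X a)ᶜ) : IsCompact (⋂₀ f) := by
  refine isCompact_of_isCompact_tauFp X (@IsClosed.isCompact _ (tauFp X) _ hfp ?_)
  refine @isClosed_sInter _ (tauFp X) _ fun s hs => ?_
  obtain ⟨a, rfl⟩ := hf s hs
  exact isClosed_tauFp_compl_V X hX a

lemma exists_mem_forall_mem_V_imp_subset (hX : (⊤ : L) ∉ X)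
    (hfp : @CompactSpace X (tauFp X)) {F : Set X} (hFc : IsClosed F) (hFi : IsIrreducible F) :
    ∃ g ∈ F, ∀ b : L, g ∈ V X b → F ⊆ V X b := by
  have hFcpt : @IsCompact X (tauFp X) F :=
    @IsClosed.isCompact _ (tauFp X) _ hfp (hFc.mono (tauFp_le_tauCl X))
  obtain ⟨g, hgF, hg⟩ := @IsCompact.inter_iInter_nonempty _ (tauFp X) _
    {b : L // (F ∩ (V X b)ᶜ).Nonempty} hFcpt (fun b => (V X b)ᶜ)
    (fun b => isClosed_tauFp_compl_V X hX b)
    (hFi.inter_biInter_nonempty (fun b => isOpen_compl_V X b) Subtype.prop)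
  refine ⟨g, hgF, fun b hgb => ?_⟩
  by_contra hFb
  exact mem_iInter.mp hg ⟨b, sdiff_nonempty.mpr hFb⟩ hgb

lemma quasiSober_tauCl (hX : (⊤ : L) ∉ X) (hfp : @CompactSpace X (tauFp X)) : QuasiSober X where
  sober {F} hFi hFc := by
    obtain ⟨g, hgF, hg⟩ := exists_mem_forall_mem_V_imp_subset X hX hfp hFc hFi
    refine ⟨g, (closure_singleton_eq_V X g).trans (subset_antisymm ?_ (hg g le_rfl))⟩
    rw [← closure_singleton_eq_V]
    exact closure_minimal (singleton_subset_iff.mpr hgF) hFc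

end

/-- If `(X, τ^fp)` is compact, then `(X, τ^cl)` is compact, T0, sober,
and has a basis of compact open sets closed under finite intersections (hence it is
a spectral space). -/
theorem spectral_of_patch_compact (X : Set L) (hX : (⊤ : L) ∉ X)
    (hfp : @CompactSpace ↥X (tauFp X)) :
    @CompactSpace ↥X (tauCl X) ∧
    @T0Space ↥X (tauCl X) ∧
    (∀ F : Set X, @IsClosed ↥X (tauCl X) F → @IsIrreducible ↥X (tauCl X) F →
      ∃! g : X, @closure ↥X (tauCl X) {g} = F) ∧
    (∃ B : Set (Set X), @TopologicalSpace.IsTopologicalBasis ↥X (tauCl X) B ∧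
      (∀ s ∈ B, @IsCompact ↥X (tauCl X) s) ∧
      (∀ s ∈ B, ∀ t ∈ B, s ∩ t ∈ B)) := by
  have hT0 := t0Space_tauCl X
  have := quasiSober_tauCl X hX hfp
  refine ⟨⟨isCompact_of_isCompact_tauFp X (@isCompact_univ _ (tauFp X) hfp)⟩, hT0, ?_, ?_⟩
  · intro F hFc hFi
    obtain ⟨g, hg⟩ := QuasiSober.sober hFi hFc
    exact ⟨g, hg, fun g' hg' => IsGenericPoint.eq hg' hg⟩
  · refine ⟨(fun f => ⋂₀ f) '' {f | f.Finite ∧ f ⊆ {s | ∃ a : L, s = (V X a)ᶜ}},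
      isTopologicalBasis_of_subbasis rfl, ?_, ?_⟩
    · rintro _ ⟨f, ⟨-, hf⟩, rfl⟩
      exact isCompact_sInter_compl_V X hX hfp hf
    · rintro _ ⟨f₁, ⟨hf₁, hs₁⟩, rfl⟩ _ ⟨f₂, ⟨hf₂, hs₂⟩, rfl⟩
      exact ⟨f₁ ∪ f₂, ⟨hf₁.union hf₂, union_subset hs₁ hs₂⟩, sInter_union f₁ f₂⟩

end ZariskiLattice
end

section
/- Let L be a complete lattice and X a set of elements of L not containing ⊤. If for some x ∈ L the variety V(x) is a reducible subset of (X, τ^cl) (nonempty and equal to a union of two closed sets, neither containing it), then there exist finitely many elements x₁, …, xₙ ∈ L such that V(x) = V(x₁) ∪ ⋯ ∪ V(xₙ) and V(xᵢ) is a proper subset of V(x) for every i. -/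
namespace ZariskiLattice

variable {L : Type*} [CompleteLattice L]

/-! A point outside a `τ^cl`-closed set `F` has a basic neighbourhood
`X \ (V a₁ ∪ ⋯ ∪ V aₖ)` missing `F`, so `F` is covered by finitely many varieties, none
containing that point. Covering `V x = F ∪ G` this way and intersecting with `V x` writes
`V x` as the union of the `V (x ⊔ aᵢ) = V x ∩ V aᵢ`, each of which misses a point of
`V x \ F` or of `V x \ G`. -/

open Topology TopologicalSpace

lemma tauCl_eq_generateFrom_range (X : Set L) :
    tauCl X = generateFrom (Set.range fun a => (V X a)ᶜ) := by
  simp only [tauCl, Set.range, eq_comm]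

lemma V_sup (X : Set L) (a b : L) : V X (a ⊔ b) = V X a ∩ V X b := by
  ext p
  exact sup_le_iff

lemma exists_finset_compl_biUnion_V_subset {X : Set L} {U : Set X} (hU : IsOpen[tauCl X] U)
    {p : X} (hp : p ∈ U) :
    ∃ S : Finset L, p ∉ ⋃ a ∈ S, V X a ∧ (⋃ a ∈ S, V X a)ᶜ ⊆ U := by
  classical
  let := tauCl X
  obtain ⟨_, ⟨f, ⟨hfin, hfsub⟩, rfl⟩, hpf, hfU⟩ :=
    (isTopologicalBasis_of_subbasis (tauCl_eq_generateFrom_range X)).exists_subset_of_mem_open hp hU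
  obtain ⟨S, -, hSf⟩ :=
    (Finset.subset_set_image_iff (s := Set.univ) (t := hfin.toFinset)).mp
      (by simpa only [Set.Finite.coe_toFinset, Set.image_univ] using hfsub)
  have hf : ⋂₀ f = (⋃ a ∈ S, V X a)ᶜ := by
    rw [← hfin.coe_toFinset, ← hSf]
    simp
  simp only [hf] at hpf hfU
  exact ⟨S, hpf, hfU⟩

lemma exists_finset_subset_biUnion_V_of_isClosed {X : Set L} {F : Set X}
    (hF : IsClosed[tauCl X] F) {p : X} (hp : p ∉ F) :
    ∃ S : Finset L, F ⊆ ⋃ a ∈ S, V X a ∧ p ∉ ⋃ a ∈ S, V X a := by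
  obtain ⟨S, hpS, hSF⟩ := exists_finset_compl_biUnion_V_subset hF.isOpen_compl hp
  exact ⟨S, Set.compl_subset_compl.mp hSF, hpS⟩

lemma V_eq_biUnion_V_sup {X : Set L} {x : L} {s : Set L} (h : V X x ⊆ ⋃ a ∈ s, V X a) :
    V X x = ⋃ a ∈ s, V X (x ⊔ a) := by
  simp only [V_sup, ← Set.inter_iUnion₂, Set.inter_eq_left.mpr h]

lemma V_sup_ssubset {X : Set L} {x a : L} {p : X} (hpx : p ∈ V X x) (hpa : p ∉ V X a) :
    V X (x ⊔ a) ⊂ V X x := by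
  rw [V_sup]
  exact ⟨Set.inter_subset_left, fun h => hpa (h hpx).2⟩

theorem variety_reducible_finite_union_general (X : Set L) (x : L)
    (hred : ∃ F G : Set X, @IsClosed ↥X (tauCl X) F ∧ @IsClosed ↥X (tauCl X) G ∧
      V X x = F ∪ G ∧ ¬ V X x ⊆ F ∧ ¬ V X x ⊆ G) :
    ∃ (n : ℕ) (f : Fin n → L),
      V X x = ⋃ i, V X (f i) ∧ ∀ i, V X (f i) ⊂ V X x := by
  classical
  obtain ⟨F, G, hF, hG, hVFG, hVF, hVG⟩ := hred
  obtain ⟨p, hpx, hpF⟩ := Set.not_subset.mp hVF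
  obtain ⟨q, hqx, hqG⟩ := Set.not_subset.mp hVG
  obtain ⟨S, hFS, hpS⟩ := exists_finset_subset_biUnion_V_of_isClosed hF hpF
  obtain ⟨T, hGT, hqT⟩ := exists_finset_subset_biUnion_V_of_isClosed hG hqG
  have hcover : V X x ⊆ ⋃ a ∈ S ∪ T, V X a := by
    rw [hVFG, Finset.set_biUnion_union]
    exact Set.union_subset_union hFS hGT
  have hproper : ∀ a ∈ S ∪ T, V X (x ⊔ a) ⊂ V X x := by
    intro a ha
    rcases Finset.mem_union.mp ha with ha | ha
    · exact V_sup_ssubset hpx fun hpa => hpS (Set.mem_biUnion ha hpa)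
    · exact V_sup_ssubset hqx fun hqa => hqT (Set.mem_biUnion ha hqa)
  obtain ⟨n, f, -, hf⟩ := ((S ∪ T).finite_toSet.image (x ⊔ ·)).fin_param
  refine ⟨n, f, ?_, fun i => ?_⟩
  · rw [← Set.biUnion_range, hf, Set.biUnion_image]
    exact V_eq_biUnion_V_sup hcover
  · obtain ⟨a, ha, hai⟩ : f i ∈ (x ⊔ ·) '' ↑(S ∪ T) := hf ▸ Set.mem_range_self i
    exact hai ▸ hproper a ha

/-- If `V(x)` is a reducible subset of `(X, τ^cl)`, then `V(x)` is a
finite union of varieties each of which is a proper subset of `V(x)`. -/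
theorem variety_reducible_finite_union (X : Set L) (hX : (⊤ : L) ∉ X) (x : L)
    (hne : (V X x).Nonempty)
    (hred : ∃ F G : Set X, @IsClosed ↥X (tauCl X) F ∧ @IsClosed ↥X (tauCl X) G ∧
      V X x = F ∪ G ∧ ¬ V X x ⊆ F ∧ ¬ V X x ⊆ G) :
    ∃ (n : ℕ) (f : Fin n → L),
      V X x = ⋃ i, V X (f i) ∧ ∀ i, V X (f i) ⊂ V X x :=
  variety_reducible_finite_union_general X x hred

end ZariskiLattice
end

section
/- Let L be a complete lattice, X a set of elements of L not containing ⊤, and suppose L is X-top. If C(L) satisfies the descending chain condition, then every element of X is strongly irreducible in C(L): for each p ∈ X and all a, b ∈ C(L), a ⊓ b ≤ p implies a ≤ p or b ≤ p. -/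
namespace ZariskiLattice

variable {L : Type*} [CompleteLattice L]

/-- If `L` is `X`-top and `C(L)` satisfies the DCC, then every element
of `X` is strongly irreducible in `C(L)`. -/
theorem mem_strongly_irreducible_of_dcc (X : Set L) (hX : (⊤ : L) ∉ X)
    (hTop : IsXTop X) (hDCC : ¬ ∃ f : ℕ → L, (∀ n, f n ∈ CL X) ∧ StrictAnti f) :
    ∀ p ∈ X, ∀ a ∈ CL X, ∀ b ∈ CL X, a ⊓ b ≤ p → a ≤ p ∨ b ≤ p := by
  intro p hp a ha b hb hab
  obtain ⟨c, hc⟩ := hTop a b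
  have hradc : rad X c = a ⊓ b := by
    have : rad X c = rad X a ⊓ rad X b := by
      simp only [rad, lanI, ← hc, iInf_union]
    rw [this, ha, hb]
  have hcrad : c ≤ rad X c := le_iInf₂ fun q hq => hq
  have hcp : c ≤ p := le_trans (hcrad.trans_eq hradc) hab
  have hmem : (⟨p, hp⟩ : X) ∈ V X a ∪ V X b := by
    rw [hc]; exact hcp
  exact hmem.imp (fun h => h) (fun h => h)

end ZariskiLattice
end

section
/- Let L be a complete lattice, X a set of elements of L not containing ⊤, and suppose L is X-top. Assume moreover that L is coatomic (every x ≠ ⊤ lies below a maximal element of L \ {⊤}) and that every maximal element of L \ {⊤} belongs to X. Then the space (X, τ) is ultraconnected (any two nonempty closed sets intersect) if and only if L is hollow, i.e. for all x, y ∈ L with x ≠ ⊤ and y ≠ ⊤, one has x ⊔ y ≠ ⊤. -/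
namespace ZariskiLattice

variable {L : Type*} [CompleteLattice L]

/-- Any open set of the classical Zariski topology is downward closed. -/
lemma open_downclosed (X : Set L) {U : Set X}
    (hU : TopologicalSpace.GenerateOpen {s : Set X | ∃ a : L, s = (V X a)ᶜ} U) :
    ∀ p m : X, (p : L) ≤ (m : L) → m ∈ U → p ∈ U := by
  induction hU with
  | basic s hs =>
      obtain ⟨a, rfl⟩ := hs
      intro p m hpm hm ha
      exact hm (ha.trans hpm)
  | univ => intro _ _ _ _; trivial
  | inter s t _ _ ihs iht =>
      intro p m hpm hm
      exact ⟨ihs p m hpm hm.1, iht p m hpm hm.2⟩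
  | sUnion S _ ih =>
      intro p m hpm hm
      obtain ⟨s, hsS, hms⟩ := hm
      exact ⟨s, hsS, ih s hsS p m hpm hms⟩

/-- If `L` is `X`-top, coatomic, and all maximal elements of
`L \ {⊤}` belong to `X`, then `(X, τ)` is ultraconnected iff `L` is hollow. -/
theorem ultraconnected_iff_hollow (X : Set L) (hX : (⊤ : L) ∉ X) (hTop : IsXTop X)
    (hco : ∀ x : L, x ≠ ⊤ → ∃ m : L, m ≠ ⊤ ∧ (∀ y, m ≤ y → y = m ∨ y = ⊤) ∧ x ≤ m)
    (hmax : ∀ m : L, m ≠ ⊤ → (∀ y, m ≤ y → y = m ∨ y = ⊤) → m ∈ X) :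
    (∀ F G : Set X, @IsClosed ↥X (tauCl X) F → @IsClosed ↥X (tauCl X) G →
      F.Nonempty → G.Nonempty → (F ∩ G).Nonempty) ↔
    (∀ x y : L, x ≠ ⊤ → y ≠ ⊤ → x ⊔ y ≠ ⊤) := by
  constructor
  · intro hUC x y hx hy hxy
    obtain ⟨m, hm, hmmax, hxm⟩ := hco x hx
    obtain ⟨n, hn, hnmax, hyn⟩ := hco y hy
    have hmX := hmax m hm hmmax
    have hnX := hmax n hn hnmax
    have hVclosed : ∀ a : L, @IsClosed ↥X (tauCl X) (V X a) := by
      intro a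
      have h : @IsOpen ↥X (tauCl X) (V X a)ᶜ :=
        TopologicalSpace.GenerateOpen.basic _ ⟨a, rfl⟩
      exact (@isOpen_compl_iff ↥X _ (tauCl X)).mp h
    obtain ⟨p, hpx, hpy⟩ := hUC (V X x) (V X y) (hVclosed x) (hVclosed y)
      ⟨⟨m, hmX⟩, hxm⟩ ⟨⟨n, hnX⟩, hyn⟩
    have h1 : (⊤ : L) ≤ (p : L) := hxy ▸ sup_le hpx hpy
    exact hX (top_le_iff.mp h1 ▸ p.2)
  · intro hhol F G hF hG ⟨p, hpF⟩ ⟨q, hqG⟩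
    have hp : (p : L) ≠ ⊤ := fun h => hX (h ▸ p.2)
    have hq : (q : L) ≠ ⊤ := fun h => hX (h ▸ q.2)
    obtain ⟨m, hm, hmmax, hle⟩ := hco _ (hhol _ _ hp hq)
    have hmX := hmax m hm hmmax
    refine ⟨⟨m, hmX⟩, ?_, ?_⟩
    · by_contra h
      exact open_downclosed X hF.isOpen_compl p ⟨m, hmX⟩
        (le_sup_left.trans hle) h hpF
    · by_contra h
      exact open_downclosed X hG.isOpen_compl q ⟨m, hmX⟩
        (le_sup_right.trans hle) h hqG

end ZariskiLattice
end
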